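/- For every λ > 0 and every point X on the de Sitter hyperboloid dS(λ) with X⁴ < −λ and (X¹,X²,X³) ≠ (0,0,0), there exist T ≠ 0, R > 0, θ ∈ [0,π] and ψ ∈ [0,2π) such that X = Ψ(T, R, θ, ψ); moreover on dS(λ) the condition X⁴ < −λ forces X⁰ ≠ 0, and the sign of T equals the sign of X⁰. -/

import Mathlib

/-!
Put x = (X¹, X², X³), r = |x| and s = sign X⁰. On dS(λ) one has
(X⁴)² − λ² = (X⁰)² − r² =: a², and a > 0 because X⁴ < −λ; in particular X⁰ ≠ 0.
The two relations are hyperbolas in the plane, so −X⁴ = λ cosh τ, s·a = λ sinh τ and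
|X⁰| = a cosh ρ, r = a sinh ρ. With T = λτ, R = λρ and (θ, ψ) the spherical angles of s·x,
one gets X = Ψ(T, R, θ, ψ); then X⁰ = λ sinh(T/λ) cosh(R/λ) has the sign of T.
-/

/-- Minkowski quadratic form on ℝ⁵. -/
noncomputable def Q (X : Fin 5 → ℝ) : ℝ :=
  -(X 0) ^ 2 + (X 1) ^ 2 + (X 2) ^ 2 + (X 3) ^ 2 + (X 4) ^ 2

/-- The hyperbolic chart Ψ of the de Sitter hyperboloid. -/
noncomputable def Psi (l T R θ ψ : ℝ) : Fin 5 → ℝ :=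
  ![l * Real.sinh (T / l) * Real.cosh (R / l),
    l * Real.sinh (T / l) * Real.sinh (R / l) * Real.sin θ * Real.cos ψ,
    l * Real.sinh (T / l) * Real.sinh (R / l) * Real.sin θ * Real.sin ψ,
    l * Real.sinh (T / l) * Real.sinh (R / l) * Real.cos θ,
    -l * Real.cosh (T / l)]

open Real Set

lemma exists_polar_angle_mem_Ico (x y : ℝ) :
    ∃ ψ ∈ Ico 0 (2 * π), √(x ^ 2 + y ^ 2) * cos ψ = x ∧ √(x ^ 2 + y ^ 2) * sin ψ = y := by
  set z : ℂ := x + y * Complex.I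
  refine ⟨toIcoMod two_pi_pos 0 z.arg, by simpa using toIcoMod_mem_Ico two_pi_pos 0 z.arg, ?_, ?_⟩
  · rw [← self_sub_toIcoDiv_zsmul, cos_periodic.sub_zsmul_eq, ← Complex.norm_add_mul_I,
      Complex.norm_mul_cos_arg]
    simp
  · rw [← self_sub_toIcoDiv_zsmul, sin_periodic.sub_zsmul_eq, ← Complex.norm_add_mul_I,
      Complex.norm_mul_sin_arg]
    simp

lemma exists_spherical_angles (x y z : ℝ) :
    ∃ θ ∈ Icc 0 π, ∃ ψ ∈ Ico 0 (2 * π),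
      √(x ^ 2 + y ^ 2 + z ^ 2) * sin θ * cos ψ = x ∧
      √(x ^ 2 + y ^ 2 + z ^ 2) * sin θ * sin ψ = y ∧
      √(x ^ 2 + y ^ 2 + z ^ 2) * cos θ = z := by
  obtain ⟨ψ, hψ, hx, hy⟩ := exists_polar_angle_mem_Ico x y
  set ρ := √(x ^ 2 + y ^ 2)
  set w : ℂ := z + ρ * Complex.I
  have hw : ‖w‖ = √(x ^ 2 + y ^ 2 + z ^ 2) := by
    rw [Complex.norm_add_mul_I, sq_sqrt (by positivity)]
    ring_nf
  have hθ : w.arg ∈ Icc 0 π := ⟨Complex.arg_nonneg_iff.mpr (by simp [w, ρ]), w.arg_le_pi⟩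
  have hsin : ‖w‖ * sin w.arg = ρ := by simp [Complex.norm_mul_sin_arg, w]
  have hcos : ‖w‖ * cos w.arg = z := by simp [Complex.norm_mul_cos_arg, w]
  rw [hw] at hsin hcos
  exact ⟨w.arg, hθ, ψ, hψ, by rw [hsin, hx], by rw [hsin, hy], hcos⟩

lemma exists_cosh_sinh_eq {ρ u v : ℝ} (hρ : 0 < ρ) (hu : 0 < u) (h : u ^ 2 - v ^ 2 = ρ ^ 2) :
    ∃ t, ρ * cosh t = u ∧ ρ * sinh t = v := by
  refine ⟨arsinh (v / ρ), ?_, by rw [sinh_arsinh]; field_simp⟩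
  have h_one_add : 1 + (v / ρ) ^ 2 = (u / ρ) ^ 2 := by
    field_simp
    linarith
  rw [cosh_arsinh, h_one_add, sqrt_sq (by positivity)]
  field_simp

lemma sign_mul_sign_self_of_ne_zero {x : ℝ} (hx : x ≠ 0) : Real.sign x * Real.sign x = 1 := by
  rcases hx.lt_or_gt with h | h <;> simp [Real.sign_of_neg, Real.sign_of_pos, h]

lemma sign_mul_abs_self (x : ℝ) : Real.sign x * |x| = x := by
  rcases lt_trichotomy x 0 with h | rfl | h
  · simp [Real.sign_of_neg h, abs_of_neg h]
  · simp
  · simp [Real.sign_of_pos h, abs_of_pos h]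

lemma sign_Psi_apply_zero {l : ℝ} (hl : 0 < l) (T R θ ψ : ℝ) :
    Real.sign (Psi l T R θ ψ 0) = Real.sign T := by
  have hcosh := cosh_pos (R / l)
  simp only [Psi, Matrix.cons_val_zero]
  rcases lt_trichotomy T 0 with hT | rfl | hT
  · have hsinh := sinh_neg_iff.mpr (div_neg_of_neg_of_pos hT hl)
    rw [Real.sign_of_neg hT,
      Real.sign_of_neg (mul_neg_of_neg_of_pos (mul_neg_of_pos_of_neg hl hsinh) hcosh)]
  · simp
  · have hsinh := sinh_pos_iff.mpr (div_pos hT hl)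
    rw [Real.sign_of_pos hT, Real.sign_of_pos (by positivity)]

lemma apply_zero_ne_zero_of_Q_eq {l : ℝ} {X : Fin 5 → ℝ} (hX : Q X = l ^ 2)
    (hX4 : l ^ 2 < X 4 ^ 2) : X 0 ≠ 0 := by
  intro h0
  unfold Q at hX
  nlinarith [sq_nonneg (X 1), sq_nonneg (X 2), sq_nonneg (X 3)]

lemma exists_eq_Psi {l : ℝ} (hl : 0 < l) {X : Fin 5 → ℝ} (hX : Q X = l ^ 2)
    (hX4 : X 4 < -l) (hx : ¬(X 1 = 0 ∧ X 2 = 0 ∧ X 3 = 0)) :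
    ∃ T R θ ψ : ℝ, 0 < R ∧ θ ∈ Icc 0 π ∧ ψ ∈ Ico 0 (2 * π) ∧ X = Psi l T R θ ψ := by
  have hX0 : X 0 ≠ 0 := apply_zero_ne_zero_of_Q_eq hX (by nlinarith)
  set s := Real.sign (X 0)
  have hss : s * s = 1 := sign_mul_sign_self_of_ne_zero hX0
  have hs_abs : s * |X 0| = X 0 := sign_mul_abs_self (X 0)
  set r := √(X 1 ^ 2 + X 2 ^ 2 + X 3 ^ 2)
  have hr : 0 < r := by
    refine sqrt_pos.mpr (lt_of_le_of_ne (by positivity) fun h => hx ?_)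
    refine ⟨?_, ?_, ?_⟩ <;> nlinarith [sq_nonneg (X 1), sq_nonneg (X 2), sq_nonneg (X 3)]
  have hr2 : r ^ 2 = X 1 ^ 2 + X 2 ^ 2 + X 3 ^ 2 := sq_sqrt (by positivity)
  set a := √(X 4 ^ 2 - l ^ 2)
  have ha : 0 < a := sqrt_pos.mpr (by nlinarith)
  have ha2 : a ^ 2 = X 4 ^ 2 - l ^ 2 := sq_sqrt (by nlinarith)
  obtain ⟨τ, hcoshτ, hsinhτ⟩ : ∃ τ, l * cosh τ = -X 4 ∧ l * sinh τ = s * a :=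
    exists_cosh_sinh_eq hl (by linarith) (by linear_combination -ha2 - a ^ 2 * hss)
  obtain ⟨ρ, hcoshρ, hsinhρ⟩ : ∃ ρ, a * cosh ρ = |X 0| ∧ a * sinh ρ = r :=
    exists_cosh_sinh_eq ha (abs_pos.mpr hX0) (by unfold Q at hX; rw [sq_abs]; linarith)
  have hρ : 0 < ρ := sinh_pos_iff.mp (pos_of_mul_pos_right (hsinhρ ▸ hr) ha.le)
  obtain ⟨θ, hθ, ψ, hψ, h1, h2, h3⟩ := exists_spherical_angles (s * X 1) (s * X 2) (s * X 3)
  have hsr : √((s * X 1) ^ 2 + (s * X 2) ^ 2 + (s * X 3) ^ 2) = r := by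
    congr 1
    linear_combination (X 1 ^ 2 + X 2 ^ 2 + X 3 ^ 2) * hss
  rw [hsr] at h1 h2 h3
  refine ⟨l * τ, l * ρ, θ, ψ, mul_pos hl hρ, hθ, hψ, ?_⟩
  funext i
  fin_cases i <;>
    simp only [Psi, mul_div_cancel_left₀ _ hl.ne', Fin.zero_eta, Fin.mk_one, Fin.reduceFinMk,
      Fin.isValue, Matrix.cons_val_zero, Matrix.cons_val_one, Matrix.cons_val]
  · linear_combination -cosh ρ * hsinhτ - s * hcoshρ - hs_abs
  · linear_combination -(sinh ρ * sin θ * cos ψ) * hsinhτ - s * sin θ * cos ψ * hsinhρ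
      - s * h1 - X 1 * hss
  · linear_combination -(sinh ρ * sin θ * sin ψ) * hsinhτ - s * sin θ * sin ψ * hsinhρ
      - s * h2 - X 2 * hss
  · linear_combination -(sinh ρ * cos θ) * hsinhτ - s * cos θ * hsinhρ - s * h3 - X 3 * hss
  · linear_combination hcoshτ

/-- Every point of dS(λ) with X⁴ < −λ off the axis is in the range of the hyperbolic
chart; X⁴ < −λ forces X⁰ ≠ 0, and the sign of T equals the sign of X⁰. -/
theorem stmt11 (l : ℝ) (hl : 0 < l) (X : Fin 5 → ℝ) (hX : Q X = l ^ 2)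
    (hX4 : X 4 < -l) (h3 : ¬(X 1 = 0 ∧ X 2 = 0 ∧ X 3 = 0)) :
    X 0 ≠ 0 ∧
    ∃ T R θ ψ : ℝ, T ≠ 0 ∧ 0 < R ∧ θ ∈ Set.Icc (0 : ℝ) Real.pi ∧
      ψ ∈ Set.Ico (0 : ℝ) (2 * Real.pi) ∧
      X = Psi l T R θ ψ ∧ Real.sign T = Real.sign (X 0) := by
  have hX0 : X 0 ≠ 0 := apply_zero_ne_zero_of_Q_eq hX (by nlinarith)
  obtain ⟨T, R, θ, ψ, hR, hθ, hψ, rfl⟩ := exists_eq_Psi hl hX hX4 h3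
  have hsign : Real.sign T = Real.sign (Psi l T R θ ψ 0) := (sign_Psi_apply_zero hl T R θ ψ).symm
  have hT : T ≠ 0 := fun hT =>
    hX0 (Real.sign_eq_zero_iff.mp (by rw [← hsign, hT, Real.sign_zero]))
  exact ⟨hX0, T, R, θ, ψ, hT, hR, hθ, hψ, rfl, hsign⟩
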